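/- Let f_m → f in L¹ with f_m, f ∈ LC, and let t_m 𝟙_{𝓔_{f_m}} be the John functions of f_m with John ellipsoids 𝓔_{f_m}. Then there exists R > 0 such that 𝓔_{f_m} ⊆ R B₂ⁿ for all m; i.e., the John ellipsoids of a convergent sequence are uniformly bounded. -/

import Mathlib

open MeasureTheory Filter
noncomputable section

/-- `ℝⁿ` as a Euclidean space. -/
abbrev Euc (n : ℕ) := EuclideanSpace ℝ (Fin n)

/-- `f` is a non-degenerate, upper semicontinuous, integrable log-concave
function on `ℝⁿ` (the class `LC`): `f ≥ 0`, `f` is upper semicontinuous,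
log-concave, integrable with `0 < ∫ f`, and the interior of its support is
non-empty. -/
def IsLC {n : ℕ} (f : Euc n → ℝ) : Prop :=
  (∀ x, 0 ≤ f x) ∧ UpperSemicontinuous f ∧
  (∀ x y : Euc n, ∀ a b : ℝ, 0 ≤ a → 0 ≤ b → a + b = 1 →
      f x ^ a * f y ^ b ≤ f (a • x + b • y)) ∧
  Integrable f ∧ 0 < ∫ x, f x ∧ (interior (Function.support f)).Nonempty

/-- `(t, A)` is a John pair for `f`: `A` is a nonsingular affine map, `t ≥ 0`,
`t 𝟙_{A B₂ⁿ} ≤ f`, and `t |det A|` is maximal among admissible pairs; the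
John function of `f` is then `J(f) = t 𝟙_{𝓔_f}` with `𝓔_f = A B₂ⁿ`. -/
def IsJohnPair {n : ℕ} (f : Euc n → ℝ) (t : ℝ) (A : Euc n →ᵃ[ℝ] Euc n) : Prop :=
  Function.Bijective A ∧ 0 ≤ t ∧
  (∀ x ∈ A '' Metric.closedBall 0 1, t ≤ f x) ∧
  ∀ (t' : ℝ) (A' : Euc n →ᵃ[ℝ] Euc n), Function.Bijective A' → 0 ≤ t' →
    (∀ x ∈ A' '' Metric.closedBall 0 1, t' ≤ f x) →
    t' * |LinearMap.det A'.linear| ≤ t * |LinearMap.det A.linear|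

/-! ### Auxiliary lemmas -/

open Metric Set

/-- Measure of the image of a set under an affine self-map of `Euc n`. -/
lemma vol_affine_image {n : ℕ} (A : Euc n →ᵃ[ℝ] Euc n) (s : Set (Euc n)) :
    volume (A '' s) = ENNReal.ofReal |LinearMap.det A.linear| * volume s := by
  have h : ⇑A = fun y => A.linear y + A 0 := by
    ext1 y
    have := congrFun A.decomp y
    simpa using this
  rw [h, show ((fun y => A.linear y + A 0) '' s) = (fun v => v + A 0) '' (A.linear '' s) by
    rw [Set.image_image]]
  rw [Set.image_add_right, measure_preimage_add_right, Measure.addHaar_image_linearMap]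

lemma vol_unit_ball_pos {n : ℕ} : 0 < volume (closedBall (0 : Euc n) 1) :=
  lt_of_lt_of_le (measure_ball_pos volume 0 one_pos) (measure_mono ball_subset_closedBall)

lemma vol_unit_ball_ne_top {n : ℕ} : volume (closedBall (0 : Euc n) 1) ≠ ⊤ :=
  measure_closedBall_lt_top.ne

/-- Superlevel sets of a nonneg usc log-concave function are closed and convex. -/
lemma superlevel_closed_convex {n : ℕ} {g : Euc n → ℝ}
    (husc : UpperSemicontinuous g)
    (hlc : ∀ x y : Euc n, ∀ a b : ℝ, 0 ≤ a → 0 ≤ b → a + b = 1 →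
      g x ^ a * g y ^ b ≤ g (a • x + b • y)) {s : ℝ} (hs : 0 < s) :
    IsClosed {y | s ≤ g y} ∧ Convex ℝ {y | s ≤ g y} := by
  constructor
  · have : {y | s ≤ g y} = (g ⁻¹' Set.Iio s)ᶜ := by
      ext y; simp [not_lt]
    rw [this]
    exact (upperSemicontinuous_iff_isOpen_preimage.1 husc s).isClosed_compl
  · intro x hx y hy a b ha hb hab
    have h1 : s ^ a ≤ g x ^ a := Real.rpow_le_rpow hs.le hx ha
    have h2 : s ^ b ≤ g y ^ b := Real.rpow_le_rpow hs.le hy hb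
    have h3 : s ^ a * s ^ b ≤ g x ^ a * g y ^ b :=
      mul_le_mul h1 h2 (Real.rpow_nonneg hs.le b) (Real.rpow_nonneg (hs.le.trans hx) a)
    have h4 : s ^ a * s ^ b = s := by
      rw [← Real.rpow_add hs, hab, Real.rpow_one]
    have := (h3.trans (hlc x y a b ha hb hab))
    rw [h4] at this
    exact this

/-- If a closed convex set misses some point of the half-radius ball, then the difference
of the ball with the set has volume at least that of a ball of radius `r/10`. -/
lemma cap_lemma {n : ℕ} {K : Set (Euc n)} (hKc : IsClosed K) (hKv : Convex ℝ K)
    {x₀ : Euc n} {r : ℝ} (hr : 0 < r)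
    (hvol : volume (closedBall x₀ r \ K)
      < ENNReal.ofReal ((r / 10) ^ n) * volume (closedBall (0 : Euc n) 1)) :
    closedBall x₀ (r / 2) ⊆ K := by
  intro p hp
  by_contra hpK
  obtain ⟨φ, u, hKu, hup⟩ := geometric_hahn_banach_closed_point hKv hKc hpK
  set v := (InnerProductSpace.toDual ℝ (Euc n)).symm φ with hv
  have hφ : ∀ y, φ y = inner ℝ v y := fun y => (InnerProductSpace.toDual_symm_apply).symm
  set ν : Euc n := ‖v‖⁻¹ • v with hν
  have hνn : ‖ν‖ ≤ 1 := by
    by_cases hv0 : v = 0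
    · simp [hν, hv0]
    · rw [hν, norm_smul, norm_inv, norm_norm, inv_mul_cancel₀ (norm_ne_zero_iff.2 hv0)]
  have hinner : (inner ℝ v ν : ℝ) = ‖v‖ := by
    by_cases hv0 : v = 0
    · simp [hν, hv0]
    · rw [hν, real_inner_smul_right, real_inner_self_eq_norm_mul_norm]
      field_simp
  set q := p + (2 * r / 5) • ν with hq
  have hsub : closedBall q (r / 10) ⊆ closedBall x₀ r \ K := by
    intro y hy
    rw [mem_closedBall] at hy hp
    constructor
    · rw [mem_closedBall]
      have h1 : dist y x₀ ≤ dist y q + dist q p + dist p x₀ := dist_triangle4 y q p x₀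
      have h2 : dist q p ≤ 2 * r / 5 := by
        rw [hq, dist_eq_norm]
        have : p + (2 * r / 5) • ν - p = (2 * r / 5) • ν := by abel
        rw [this, norm_smul]
        calc ‖(2 * r / 5 : ℝ)‖ * ‖ν‖ ≤ ‖(2 * r / 5 : ℝ)‖ * 1 := by
              exact mul_le_mul_of_nonneg_left hνn (norm_nonneg _)
          _ = |2 * r / 5| := by rw [mul_one]; rfl
          _ = 2 * r / 5 := abs_of_nonneg (by positivity)
      nlinarith [hy, hp]
    · intro hyK
      have hlt := hKu y hyK
      -- show u < φ y to get a contradiction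
      have hyq : ‖y - q‖ ≤ r / 10 := by
        rw [← dist_eq_norm]; exact hy
      have e1 : φ y = φ p + (2 * r / 5) * ‖v‖ + inner ℝ v (y - q) := by
        rw [hφ, hφ]
        have e0 : (inner ℝ v y : ℝ) = inner ℝ v q + inner ℝ v (y - q) := by
          conv_lhs => rw [show y = q + (y - q) by abel]
          rw [inner_add_right]
        rw [e0, hq, inner_add_right, real_inner_smul_right, hinner]
      have e2 : (-(‖v‖ * (r / 10)) : ℝ) ≤ inner ℝ v (y - q) := by
        have := abs_real_inner_le_norm v (y - q)
        have h3 : ‖v‖ * ‖y - q‖ ≤ ‖v‖ * (r / 10) :=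
          mul_le_mul_of_nonneg_left hyq (norm_nonneg _)
        nlinarith [neg_abs_le (inner ℝ v (y - q) : ℝ)]
      have : u < φ y := by
        have hn : (0 : ℝ) ≤ ‖v‖ := norm_nonneg _
        nlinarith [hup]
      exact absurd hlt (not_lt.2 this.le)
  have hge : ENNReal.ofReal ((r / 10) ^ n) * volume (closedBall (0 : Euc n) 1)
      ≤ volume (closedBall x₀ r \ K) := by
    calc ENNReal.ofReal ((r / 10) ^ n) * volume (closedBall (0 : Euc n) 1)
        = volume (closedBall q (r / 10)) := by
          rw [Measure.addHaar_closedBall' volume q (by positivity), finrank_euclideanSpace_fin]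
      _ ≤ volume (closedBall x₀ r \ K) := measure_mono hsub
  exact absurd hvol (not_lt.2 hge)

/-- An `LC` function is bounded below by a positive constant on some small closed ball. -/
lemma exists_pos_on_ball {n : ℕ} {f : Euc n → ℝ} (hf : IsLC f) :
    ∃ (x₀ : Euc n) (r s₀ : ℝ), 0 < r ∧ 0 < s₀ ∧ ∀ y ∈ closedBall x₀ r, s₀ ≤ f y := by
  obtain ⟨hf0, husc, hlc, hint, hpos, ⟨x₀, hx₀⟩⟩ := hf
  obtain ⟨r₂, hr₂, hball⟩ := Metric.isOpen_iff.1 isOpen_interior x₀ hx₀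
  have hsupp : closedBall x₀ (r₂ / 2) ⊆ Function.support f := by
    intro y hy
    exact interior_subset
      (hball (mem_ball.2 (lt_of_le_of_lt (mem_closedBall.1 hy) (by linarith))))
  set r₁ := r₂ / 2 with hr₁def
  have hr₁ : 0 < r₁ := by positivity
  set K : ℕ → Set (Euc n) := fun k => {y | (1 : ℝ) / (k + 1) ≤ f y} with hK
  set D : ℕ → Set (Euc n) := fun k => closedBall x₀ r₁ \ K k with hD
  have hKmeas : ∀ k, IsClosed (K k) ∧ Convex ℝ (K k) := fun k =>
    superlevel_closed_convex husc hlc (by positivity)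
  have hDmeas : ∀ k, MeasurableSet (D k) := fun k =>
    measurableSet_closedBall.diff (hKmeas k).1.measurableSet
  have hanti : Antitone D := by
    intro k l hkl
    apply Set.diff_subset_diff_right
    intro y hy
    have : (1 : ℝ) / (l + 1) ≤ 1 / (k + 1) := by
      apply one_div_le_one_div_of_le (by positivity)
      exact_mod_cast add_le_add_left (Nat.cast_le.2 hkl) 1
    exact le_trans this hy
  have hiempty : (⋂ k, D k) = ∅ := by
    ext y
    simp only [Set.mem_iInter, Set.mem_empty_iff_false, iff_false, not_forall]
    by_cases hy : y ∈ closedBall x₀ r₁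
    · have hfy : 0 < f y := by
        have := hsupp hy
        rcases lt_or_eq_of_le (hf0 y) with h | h
        · exact h
        · exact absurd h.symm this
      obtain ⟨k, hk⟩ := exists_nat_one_div_lt hfy
      exact ⟨k, fun hmem => hmem.2 hk.le⟩
    · exact ⟨0, fun hmem => hy hmem.1⟩
  have htend : Tendsto (volume ∘ D) atTop (nhds (volume (⋂ k, D k))) := by
    apply tendsto_measure_iInter_atTop (fun k => (hDmeas k).nullMeasurableSet) hanti
    exact ⟨0, ((measure_mono Set.diff_subset).trans_lt measure_closedBall_lt_top).ne⟩
  rw [hiempty, measure_empty] at htend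
  have hthresh : (0 : ENNReal) < ENNReal.ofReal ((r₁ / 10) ^ n) * volume (closedBall (0 : Euc n) 1) := by
    apply ENNReal.mul_pos
    · simp only [ne_eq, ENNReal.ofReal_eq_zero, not_le]
      positivity
    · exact vol_unit_ball_pos.ne'
  obtain ⟨k, hk⟩ := (htend.eventually (eventually_lt_nhds hthresh)).exists
  refine ⟨x₀, r₁ / 2, 1 / ((k : ℝ) + 1), by positivity, by positivity, ?_⟩
  have := cap_lemma (hKmeas k).1 (hKmeas k).2 hr₁ hk
  intro y hy
  exact this hy

/-- Tail integrals of a nonnegative integrable function are eventually small. -/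
lemma exists_tail_small {n : ℕ} {g : Euc n → ℝ} (h0 : ∀ x, 0 ≤ g x) (hint : Integrable g)
    {ε : ℝ} (hε : 0 < ε) :
    ∃ R₁ : ℝ, 0 < R₁ ∧ (∫ x in (closedBall (0 : Euc n) R₁)ᶜ, g x) < ε := by
  have hunion : (⋃ k : ℕ, closedBall (0 : Euc n) (k : ℝ)) = Set.univ := by
    apply Set.eq_univ_of_forall
    intro x
    obtain ⟨k, hk⟩ := exists_nat_ge ‖x‖
    exact Set.mem_iUnion.2 ⟨k, by rwa [mem_closedBall, dist_zero_right]⟩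
  have hmono : Monotone fun k : ℕ => closedBall (0 : Euc n) (k : ℝ) := fun k l hkl =>
    closedBall_subset_closedBall (by exact_mod_cast hkl)
  have htend := tendsto_setIntegral_of_monotone (fun k : ℕ => measurableSet_closedBall)
    hmono (by rw [hunion]; exact hint.integrableOn)
  rw [hunion, setIntegral_univ] at htend
  have : ∀ᶠ k : ℕ in atTop, (∫ x, g x) - ε < ∫ x in closedBall (0 : Euc n) (k : ℝ), g x := by
    apply htend.eventually
    exact eventually_gt_nhds (by linarith)
  obtain ⟨k, hk⟩ := this.exists
  refine ⟨(k : ℝ) + 1, by positivity, ?_⟩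
  have hsplit := integral_add_compl (measurableSet_closedBall
    (x := (0 : Euc n)) (ε := ((k : ℝ) + 1))) hint
  have hmono2 : ∫ x in (closedBall (0 : Euc n) ((k : ℝ) + 1))ᶜ, g x
      ≤ ∫ x in (closedBall (0 : Euc n) (k : ℝ))ᶜ, g x := by
    apply setIntegral_mono_set hint.integrableOn
    · exact Filter.Eventually.of_forall fun x => h0 x
    · exact HasSubset.Subset.eventuallyLE
        (Set.compl_subset_compl.2 (closedBall_subset_closedBall (by linarith)))
  have hsplit2 := integral_add_compl (measurableSet_closedBall
    (x := (0 : Euc n)) (ε := ((k : ℝ)))) hint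
  linarith

/-- The affine map `y ↦ x₀ + k • y`. -/
def transMap {n : ℕ} (x₀ : Euc n) (k : ℝ) : Euc n →ᵃ[ℝ] Euc n where
  toFun := fun y => x₀ + k • y
  linear := k • LinearMap.id
  map_vadd' := fun p v => by
    show x₀ + k • (v + p) = k • v + (x₀ + k • p)
    rw [smul_add]; abel

lemma transMap_apply {n : ℕ} (x₀ : Euc n) (k : ℝ) (y : Euc n) :
    transMap x₀ k y = x₀ + k • y := rfl

lemma transMap_linear {n : ℕ} (x₀ : Euc n) (k : ℝ) :
    (transMap x₀ k).linear = k • LinearMap.id := rfl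

lemma transMap_bij {n : ℕ} (x₀ : Euc n) {k : ℝ} (hk : k ≠ 0) :
    Function.Bijective (transMap x₀ k) := by
  rw [Function.bijective_iff_has_inverse]
  refine ⟨fun y => k⁻¹ • (y - x₀), fun y => ?_, fun y => ?_⟩
  · show k⁻¹ • (transMap x₀ k y - x₀) = y
    rw [transMap_apply]
    rw [show x₀ + k • y - x₀ = k • y by abel, smul_smul, inv_mul_cancel₀ hk, one_smul]
  · show transMap x₀ k (k⁻¹ • (y - x₀)) = y
    rw [transMap_apply, smul_smul, mul_inv_cancel₀ hk, one_smul]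
    abel

lemma transMap_det {n : ℕ} (x₀ : Euc n) (k : ℝ) :
    LinearMap.det (transMap x₀ k).linear = k ^ n := by
  rw [transMap_linear, LinearMap.det_smul, LinearMap.det_id, finrank_euclideanSpace_fin, mul_one]

set_option maxHeartbeats 2000000 in
/-- for a sequence in `LC` converging in `L¹` to `f ∈ LC`, the
John ellipsoids `𝓔_{f_m} = A_m B₂ⁿ` are uniformly bounded: there is `R > 0`
with `𝓔_{f_m} ⊆ R B₂ⁿ` for all `m`. -/
theorem john_ellipsoids_uniformly_bounded (n : ℕ) (F : ℕ → Euc n → ℝ)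
    (f : Euc n → ℝ) (hF : ∀ m, IsLC (F m)) (hf : IsLC f)
    (hL1 : Tendsto (fun m => ∫ x, |F m x - f x|) atTop (nhds 0))
    (T : ℕ → ℝ) (A : ℕ → Euc n →ᵃ[ℝ] Euc n)
    (hJohn : ∀ m, IsJohnPair (F m) (T m) (A m)) :
    ∃ R > (0 : ℝ), ∀ m, A m '' Metric.closedBall 0 1 ⊆ Metric.closedBall 0 R := by
  classical
  obtain ⟨x₀, r, s₀, hr, hs₀, hfball⟩ := exists_pos_on_ball hf
  have hf0 := hf.1
  have hfint := hf.2.2.2.1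
  set ωn : ℝ := (volume (closedBall (0 : Euc n) 1)).toReal with hωn
  have hωpos : 0 < ωn := ENNReal.toReal_pos vol_unit_ball_pos.ne' vol_unit_ball_ne_top
  set c : ℝ := (s₀ / 2) * (r / 2) ^ n with hc
  have hcpos : 0 < c := by positivity
  set ε : ℝ := c * (1 / 4) ^ n * ωn / 4 with hε
  have hεpos : 0 < ε := by positivity
  obtain ⟨R₁, hR₁, htail⟩ := exists_tail_small hf0 hfint hεpos
  set δ : ℝ := (s₀ / 2) * ((r / 10) ^ n * ωn) with hδ
  have hδpos : 0 < δ := by positivity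
  have hev : ∀ᶠ m in atTop, (∫ x, |F m x - f x|) < min ε δ :=
    hL1.eventually (eventually_lt_nhds (lt_min hεpos hδpos))
  obtain ⟨M, hM⟩ := eventually_atTop.1 hev
  -- the key uniform bound for `m ≥ M`
  have hmain : ∀ m, M ≤ m → A m '' closedBall 0 1 ⊆ closedBall (0 : Euc n) (2 * R₁) := by
    intro m hm
    obtain ⟨hFm0, hFmusc, hFmlc, hFmint, -, -⟩ := hF m
    obtain ⟨hAbij, hTnonneg, hTle, hmax⟩ := hJohn m
    have hL1m : (∫ x, |F m x - f x|) < min ε δ := hM m hm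
    -- Step 1: `F m ≥ s₀/2` on `closedBall x₀ (r/2)`.
    have hKcc := superlevel_closed_convex hFmusc hFmlc (s := s₀ / 2) (by positivity)
    have hFmball : ∀ y ∈ closedBall x₀ (r / 2), s₀ / 2 ≤ F m y := by
      have hcap : closedBall x₀ (r / 2) ⊆ {y | s₀ / 2 ≤ F m y} := by
        apply cap_lemma hKcc.1 hKcc.2 hr
        set S : Set (Euc n) := closedBall x₀ r ∩ {y | F m y < s₀ / 2} with hS
        have hSsub : closedBall x₀ r \ {y | s₀ / 2 ≤ F m y} ⊆ S := by
          intro y hy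
          refine ⟨hy.1, ?_⟩
          have h2 := hy.2
          simp only [Set.mem_setOf_eq] at h2 ⊢
          exact not_le.1 h2
        have hSmeas : MeasurableSet S :=
          measurableSet_closedBall.inter
            (upperSemicontinuous_iff_isOpen_preimage.1 hFmusc _).measurableSet
        have hSfin : volume S ≠ ⊤ :=
          ((measure_mono Set.inter_subset_left).trans_lt measure_closedBall_lt_top).ne
        have hmarkov : (s₀ / 2) * (volume S).toReal ≤ ∫ x in S, |F m x - f x| := by
          show s₀ / 2 * volume.real S ≤ _
          apply setIntegral_ge_of_const_le_real hSmeas hSfin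
          · intro x hx
            have h1 : s₀ ≤ f x := hfball x hx.1
            have h2 : F m x < s₀ / 2 := hx.2
            calc s₀ / 2 = s₀ - s₀ / 2 := by ring
              _ ≤ f x - F m x := by linarith
              _ ≤ |F m x - f x| := by rw [abs_sub_comm]; exact le_abs_self _
          · exact ((hFmint.sub hfint).abs).integrableOn
        have hintle : (∫ x in S, |F m x - f x|) ≤ ∫ x, |F m x - f x| :=
          setIntegral_le_integral ((hFmint.sub hfint).abs)
            (Filter.Eventually.of_forall fun x => abs_nonneg _)
        have htoReal : (volume S).toReal < (r / 10) ^ n * ωn := by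
          have h3 : (s₀ / 2) * (volume S).toReal < δ :=
            lt_of_le_of_lt (hmarkov.trans hintle) (lt_of_lt_of_le hL1m (min_le_right _ _))
          rw [hδ] at h3
          exact (mul_lt_mul_iff_right₀ (by positivity)).1 h3
        have hκfin : ENNReal.ofReal ((r / 10) ^ n) * volume (closedBall (0 : Euc n) 1) ≠ ⊤ :=
          ENNReal.mul_ne_top ENNReal.ofReal_ne_top vol_unit_ball_ne_top
        have hvolS : volume S
            < ENNReal.ofReal ((r / 10) ^ n) * volume (closedBall (0 : Euc n) 1) := by
          refine (ENNReal.toReal_lt_toReal hSfin hκfin).1 ?_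
          rw [ENNReal.toReal_mul, ENNReal.toReal_ofReal (by positivity)]
          exact htoReal
        exact lt_of_le_of_lt (measure_mono hSsub) hvolS
      intro y hy
      exact hcap hy
    -- Step 2: competitor gives a lower bound on the John value.
    have hdetA' : LinearMap.det (transMap x₀ (r / 2)).linear = (r / 2) ^ n := transMap_det _ _
    have himg : ∀ x ∈ (transMap x₀ (r / 2)) '' closedBall 0 1, s₀ / 2 ≤ F m x := by
      rintro x ⟨y, hy, rfl⟩
      apply hFmball
      rw [transMap_apply, mem_closedBall]
      rw [dist_eq_norm, show x₀ + (r / 2) • y - x₀ = (r / 2) • y by abel, norm_smul]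
      have hyn : ‖y‖ ≤ 1 := mem_closedBall_zero_iff.1 hy
      calc ‖(r / 2 : ℝ)‖ * ‖y‖ ≤ ‖(r / 2 : ℝ)‖ * 1 :=
            mul_le_mul_of_nonneg_left hyn (norm_nonneg _)
        _ = |r / 2| := mul_one _
        _ = r / 2 := abs_of_nonneg (by positivity)
    have hlow : c ≤ T m * |LinearMap.det (A m).linear| := by
      have h := hmax (s₀ / 2) (transMap x₀ (r / 2))
        (transMap_bij x₀ (by positivity)) (by positivity) himg
      rw [hdetA', abs_of_nonneg (by positivity : (0:ℝ) ≤ (r / 2) ^ n)] at h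
      rw [hc]
      exact h
    -- Step 3: contradiction if the ellipsoid sticks out.
    set E := A m '' closedBall (0 : Euc n) 1 with hE
    have hEcomp : IsCompact E :=
      (isCompact_closedBall _ _).image (A m).continuous_of_finiteDimensional
    have hEne : E.Nonempty := ⟨A m 0, ⟨0, mem_closedBall_self (by norm_num), rfl⟩⟩
    obtain ⟨x, hxE, hxmax⟩ := hEcomp.exists_isMaxOn hEne continuous_norm.continuousOn
    have hxmax' : ∀ y ∈ E, ‖y‖ ≤ ‖x‖ := fun y hy => hxmax hy
    have hbound : ‖x‖ ≤ 2 * R₁ := by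
      by_contra hρ
      push_neg at hρ
      set ρ := ‖x‖ with hρdef
      have hρpos : 0 < ρ := lt_trans (by positivity) hρ
      obtain ⟨u, hu, hAu⟩ := hxE
      set S' := A m '' closedBall ((3 / 4 : ℝ) • u) (1 / 4) with hS'
      have hsub1 : closedBall ((3 / 4 : ℝ) • u) (1 / 4) ⊆ closedBall (0 : Euc n) 1 := by
        intro z hz
        rw [mem_closedBall_zero_iff]
        have h1 : ‖z - (3 / 4 : ℝ) • u‖ ≤ 1 / 4 := by rw [← dist_eq_norm]; exact hz
        have h2 : ‖(3 / 4 : ℝ) • u‖ ≤ 3 / 4 := by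
          rw [norm_smul]
          have hun : ‖u‖ ≤ 1 := mem_closedBall_zero_iff.1 hu
          calc ‖(3 / 4 : ℝ)‖ * ‖u‖ ≤ ‖(3 / 4 : ℝ)‖ * 1 :=
                mul_le_mul_of_nonneg_left hun (norm_nonneg _)
            _ = |3 / 4| := mul_one _
            _ = 3 / 4 := by rw [abs_of_nonneg]; norm_num
        calc ‖z‖ = ‖z - (3 / 4 : ℝ) • u + (3 / 4 : ℝ) • u‖ := by rw [sub_add_cancel]
          _ ≤ ‖z - (3 / 4 : ℝ) • u‖ + ‖(3 / 4 : ℝ) • u‖ := norm_add_le _ _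
          _ ≤ 1 / 4 + 3 / 4 := add_le_add h1 h2
          _ = 1 := by norm_num
      have hS'E : S' ⊆ E := Set.image_mono hsub1
      have hfar : S' ⊆ (closedBall (0 : Euc n) R₁)ᶜ := by
        rintro _ ⟨z, hzball, rfl⟩
        set w := (4 : ℝ) • (z - (3 / 4 : ℝ) • u) with hw
        have hwn : ‖w‖ ≤ 1 := by
          rw [hw, norm_smul]
          have hzn : ‖z - (3 / 4 : ℝ) • u‖ ≤ 1 / 4 := by rw [← dist_eq_norm]; exact hzball
          calc ‖(4 : ℝ)‖ * ‖z - (3 / 4 : ℝ) • u‖ ≤ ‖(4 : ℝ)‖ * (1 / 4) :=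
                mul_le_mul_of_nonneg_left hzn (norm_nonneg _)
            _ = 1 := by rw [Real.norm_eq_abs, abs_of_nonneg]; norm_num; norm_num
        have hzdecomp : z = (3 / 4 : ℝ) • u + (1 / 4 : ℝ) • w := by
          have h4 : (1 / 4 : ℝ) • w = z - (3 / 4 : ℝ) • u := by
            rw [hw, smul_smul]; norm_num
          rw [h4]; abel
        have hcombo : A m z = (3 / 4 : ℝ) • A m u + (1 / 4 : ℝ) • A m w := by
          rw [hzdecomp]
          exact Convex.combo_affine_apply (by norm_num)
        have hAwE : A m w ∈ E := ⟨w, mem_closedBall_zero_iff.2 hwn, rfl⟩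
        have hAwn : ‖A m w‖ ≤ ρ := hxmax' _ hAwE
        have hip : ρ ^ 2 / 2 ≤ inner ℝ x (A m z) := by
          rw [hcombo, inner_add_right, real_inner_smul_right, real_inner_smul_right, hAu,
            real_inner_self_eq_norm_mul_norm]
          have h5 : |(inner ℝ x (A m w) : ℝ)| ≤ ρ * ρ := by
            refine le_trans (abs_real_inner_le_norm _ _) ?_
            exact mul_le_mul_of_nonneg_left hAwn (norm_nonneg _)
          nlinarith [neg_abs_le (inner ℝ x (A m w) : ℝ)]
        have h6 : (inner ℝ x (A m z) : ℝ) ≤ ρ * ‖A m z‖ := by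
          calc (inner ℝ x (A m z) : ℝ) ≤ |(inner ℝ x (A m z) : ℝ)| := le_abs_self _
            _ ≤ ‖x‖ * ‖A m z‖ := abs_real_inner_le_norm _ _
        have h67 : ρ ^ 2 / 2 ≤ ρ * ‖A m z‖ := le_trans hip h6
        have h7 : ρ / 2 ≤ ‖A m z‖ := by nlinarith [h67, hρpos]
        simp only [Set.mem_compl_iff, mem_closedBall, dist_zero_right]
        intro h8
        linarith
      have hS'comp : IsCompact S' :=
        (isCompact_closedBall _ _).image (A m).continuous_of_finiteDimensional
      have hS'meas : MeasurableSet S' := hS'comp.isClosed.measurableSet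
      have hS'fin : volume S' ≠ ⊤ := hS'comp.measure_lt_top.ne
      have hS'vol : (volume S').toReal = |LinearMap.det (A m).linear| * ((1 / 4) ^ n * ωn) := by
        rw [hS', vol_affine_image, Measure.addHaar_closedBall' volume _ (by norm_num),
          finrank_euclideanSpace_fin, ENNReal.toReal_mul, ENNReal.toReal_mul,
          ENNReal.toReal_ofReal (abs_nonneg _), ENNReal.toReal_ofReal (by norm_num : (0:ℝ) ≤ (1/4)^n)]
      have hstep1 : T m * (volume S').toReal ≤ ∫ x in S', F m x := by
        exact setIntegral_ge_of_const_le_real hS'meas hS'fin (fun y hy => hTle y (hS'E hy))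
          hFmint.integrableOn
      have hstep2 : (∫ x in S', F m x) ≤ ∫ x in (closedBall (0 : Euc n) R₁)ᶜ, F m x :=
        setIntegral_mono_set hFmint.integrableOn
          (Filter.Eventually.of_forall fun y => hFm0 y)
          (HasSubset.Subset.eventuallyLE hfar)
      have hstep3 : (∫ x in (closedBall (0 : Euc n) R₁)ᶜ, F m x)
          ≤ (∫ x in (closedBall (0 : Euc n) R₁)ᶜ, f x)
            + ∫ x in (closedBall (0 : Euc n) R₁)ᶜ, |F m x - f x| := by
        have hptwise : ∀ y, F m y ≤ f y + |F m y - f y| := fun y => by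
          have := le_abs_self (F m y - f y); linarith
        calc ∫ x in (closedBall (0 : Euc n) R₁)ᶜ, F m x
            ≤ ∫ x in (closedBall (0 : Euc n) R₁)ᶜ, (f x + |F m x - f x|) :=
              integral_mono hFmint.integrableOn
                (hfint.integrableOn.add ((hFmint.sub hfint).abs.integrableOn))
                (fun y => hptwise y)
          _ = _ := integral_add hfint.integrableOn ((hFmint.sub hfint).abs.integrableOn)
      have hstep4 : (∫ x in (closedBall (0 : Euc n) R₁)ᶜ, |F m x - f x|) ≤ ∫ x, |F m x - f x| :=
        setIntegral_le_integral ((hFmint.sub hfint).abs)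
          (Filter.Eventually.of_forall fun x => abs_nonneg _)
      have hlower : 4 * ε ≤ T m * (volume S').toReal := by
        rw [hS'vol, hε]
        have hq : (0:ℝ) ≤ (1 / 4) ^ n * ωn := by positivity
        nlinarith [hlow, hTnonneg, mul_le_mul_of_nonneg_right hlow hq]
      have hupper : (∫ x in (closedBall (0 : Euc n) R₁)ᶜ, F m x) < 2 * ε := by
        have hL1ε : (∫ x, |F m x - f x|) < ε := lt_of_lt_of_le hL1m (min_le_left _ _)
        linarith
      linarith
    intro y hyE
    rw [mem_closedBall, dist_zero_right]
    exact le_trans (hxmax' y hyE) hbound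
  -- per-`m` bounds and combination
  have hper : ∀ m, ∃ Rm : ℝ, A m '' closedBall 0 1 ⊆ closedBall (0 : Euc n) Rm := fun m => by
    have hcomp : IsCompact (A m '' closedBall 0 1) :=
      (isCompact_closedBall _ _).image (A m).continuous_of_finiteDimensional
    exact hcomp.isBounded.subset_closedBall 0
  choose Rm hRm using hper
  set Rfin : ℝ := max (max (2 * R₁) 1) (((Finset.range M).sup fun m => ⌈Rm m⌉₊ : ℕ) : ℝ)
    with hRfin
  refine ⟨Rfin, lt_of_lt_of_le one_pos ((le_max_right _ 1).trans (le_max_left _ _)), ?_⟩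
  intro m
  rcases le_or_gt M m with hm | hm
  · exact (hmain m hm).trans
      (closedBall_subset_closedBall ((le_max_left _ _).trans (le_max_left _ _)))
  · refine (hRm m).trans (closedBall_subset_closedBall ?_)
    calc Rm m ≤ (⌈Rm m⌉₊ : ℝ) := Nat.le_ceil _
      _ ≤ (((Finset.range M).sup fun m => ⌈Rm m⌉₊ : ℕ) : ℝ) := by
          exact_mod_cast Finset.le_sup (f := fun m => ⌈Rm m⌉₊) (Finset.mem_range.2 hm)
      _ ≤ Rfin := le_max_right _ _
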